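/- Let S be a thick generalized quadrangle and S' a thick full subquadrangle of S that is a geometrical hyperplane of S, and let A be the geometry of points and lines of S not in S'. The relation on the points of A defined by 'x ≈ y if and only if x = y or no point of A is collinear in S with both x and y' is an equivalence relation, whose classes are exactly the fibers of the canonical projection π. -/

import Mathlib

namespace GQpaper

variable {P L : Type}

/-- Two points of a point-line geometry are collinear: they are equal or lie on a
common line. -/
def Collinear (I : P → L → Prop) (x y : P) : Prop :=
  x = y ∨ ∃ l : L, I x l ∧ I y l

/-- Generalized quadrangle axioms: two distinct points are on at most one common line,
and for every non-incident point-line pair `(x, l)` there is a unique pair `(y, M)`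
with `x I M`, `y I M`, `y I l`. -/
def IsGQ (I : P → L → Prop) : Prop :=
  (∀ x y : P, x ≠ y → ∀ M N : L, I x M → I y M → I x N → I y N → M = N) ∧
  (∀ (x : P) (l : L), ¬ I x l → ∃! p : P × L, I x p.2 ∧ I p.1 p.2 ∧ I p.1 l)

/-- Thick: every line has at least 3 points and every point is on at least 3 lines. -/
def Thick (I : P → L → Prop) : Prop :=
  (∀ l : L, ∃ x y z : P, x ≠ y ∧ y ≠ z ∧ x ≠ z ∧ I x l ∧ I y l ∧ I z l) ∧
  (∀ x : P, ∃ l m n : L, l ≠ m ∧ m ≠ n ∧ l ≠ n ∧ I x l ∧ I x m ∧ I x n)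

/-- The induced incidence relation on a subgeometry `(P', L')`. -/
def SubIncid (I : P → L → Prop) (P' : Set P) (L' : Set L) : ↥P' → ↥L' → Prop :=
  fun x l => I x.1 l.1

/-- A subgeometry is full if every point of the ambient geometry incident with one of
its lines belongs to it. -/
def IsFull (I : P → L → Prop) (P' : Set P) (L' : Set L) : Prop :=
  ∀ l ∈ L', ∀ x : P, I x l → x ∈ P'

/-- A geometrical hyperplane: each of its lines contains at least 2 of its points, and
every line of the ambient geometry either is a line of the subgeometry all of whose
points lie in the subgeometry, or contains exactly one point of the subgeometry. -/
def IsGeomHyperplane (I : P → L → Prop) (P' : Set P) (L' : Set L) : Prop :=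
  (∀ l ∈ L', ∃ x y : P, x ≠ y ∧ x ∈ P' ∧ y ∈ P' ∧ I x l ∧ I y l) ∧
  (∀ l : L, (l ∈ L' ∧ ∀ x : P, I x l → x ∈ P') ∨ (l ∉ L' ∧ ∃! x : P, I x l ∧ x ∈ P'))

/-- An ovoid of the subquadrangle `(P', L')`: a set of its points meeting every one of
its lines in exactly one point. -/
def IsOvoid (I : P → L → Prop) (P' : Set P) (L' : Set L) (O : Set P) : Prop :=
  O ⊆ P' ∧ ∀ l ∈ L', ∃! x : P, x ∈ O ∧ I x l

/-- The ovoid of `S'` subtended by an external point `x`: the points of `P'` collinear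
with `x`. -/
def subtendedOvoid (I : P → L → Prop) (P' : Set P) (x : P) : Set P :=
  {y : P | y ∈ P' ∧ Collinear I x y}

/-- The rosette of ovoids determined by a line `l` (not in the subquadrangle): the set
of the ovoids subtended by the external points of `l`. -/
def rosette (I : P → L → Prop) (P' : Set P) (l : L) : Set (Set P) :=
  {O : Set P | ∃ x : P, x ∉ P' ∧ I x l ∧ O = subtendedOvoid I P' x}

/-- Points of the geometry `A = S \ S'`. -/
abbrev APoint (P' : Set P) : Type := {x : P // x ∉ P'}

/-- Lines of the geometry `A = S \ S'`. -/
abbrev ALine (L' : Set L) : Type := {l : L // l ∉ L'}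

/-- Incidence in the geometry `A`. -/
def AIncid (I : P → L → Prop) (P' : Set P) (L' : Set L) :
    APoint P' → ALine L' → Prop :=
  fun x l => I x.1 l.1

/-- Points of the geometry `E`: the subtended ovoids of `S'`. -/
abbrev EPoint (I : P → L → Prop) (P' : Set P) : Type :=
  {O : Set P // ∃ x : P, x ∉ P' ∧ O = subtendedOvoid I P' x}

/-- Lines of the geometry `E`: the rosettes of subtended ovoids of `S'`. -/
abbrev ELine (I : P → L → Prop) (P' : Set P) (L' : Set L) : Type :=
  {R : Set (Set P) // ∃ l : L, l ∉ L' ∧ R = rosette I P' l}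

/-- Incidence in `E`: membership of an ovoid in a rosette. -/
def EIncid (I : P → L → Prop) (P' : Set P) (L' : Set L) :
    EPoint I P' → ELine I P' L' → Prop :=
  fun O R => O.1 ∈ R.1

/-- The canonical projection `π : A → E` on points. -/
def piPoint (I : P → L → Prop) (P' : Set P) : APoint P' → EPoint I P' :=
  fun x => ⟨subtendedOvoid I P' x.1, x.1, x.2, rfl⟩

/-- The canonical projection `π : A → E` on lines. -/
def piLine (I : P → L → Prop) (P' : Set P) (L' : Set L) : ALine L' → ELine I P' L' :=
  fun l => ⟨rosette I P' l.1, l.1, l.2, rfl⟩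

/-- A morphism of point-line geometries: preserves incidence. -/
def IsMorphism {P₁ L₁ P₂ L₂ : Type} (I₁ : P₁ → L₁ → Prop) (I₂ : P₂ → L₂ → Prop)
    (fp : P₁ → P₂) (fl : L₁ → L₂) : Prop :=
  ∀ x l, I₁ x l → I₂ (fp x) (fl l)

/-- A cover: a morphism which is locally bijective, i.e. for every point `x` it induces
a bijection between the lines through `x` and the lines through `fp x`, and dually. -/
def IsCover {P₁ L₁ P₂ L₂ : Type} (I₁ : P₁ → L₁ → Prop) (I₂ : P₂ → L₂ → Prop)
    (fp : P₁ → P₂) (fl : L₁ → L₂) : Prop :=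
  IsMorphism I₁ I₂ fp fl ∧
  (∀ (x : P₁) (m : L₂), I₂ (fp x) m → ∃! l : L₁, I₁ x l ∧ fl l = m) ∧
  (∀ (l : L₁) (y : P₂), I₂ y (fl l) → ∃! x : P₁, I₁ x l ∧ fp x = y)

/-- An isomorphism of point-line geometries: a bijective morphism whose inverse is a
morphism, equivalently a pair of bijections under which incidence corresponds. -/
def IsIso {P₁ L₁ P₂ L₂ : Type} (I₁ : P₁ → L₁ → Prop) (I₂ : P₂ → L₂ → Prop)
    (fp : P₁ → P₂) (fl : L₁ → L₂) : Prop :=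
  Function.Bijective fp ∧ Function.Bijective fl ∧
  ∀ (x : P₁) (l : L₁), I₁ x l ↔ I₂ (fp x) (fl l)

/-- An automorphism of a point-line geometry. -/
def IsAuto (I : P → L → Prop) (fp : P → P) (fl : L → L) : Prop :=
  IsIso I I fp fl

/-- A finite GQ has order `(s, t)` if every line carries `s + 1` points and every point
carries `t + 1` lines. -/
def HasOrder (I : P → L → Prop) (s t : ℕ) : Prop :=
  (∀ l : L, {x : P | I x l}.ncard = s + 1) ∧
  (∀ x : P, {l : L | I x l}.ncard = t + 1)

/-- Every subtended ovoid of `S'` is subtended by exactly `θ` external points. -/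
def AllThetaSubtended (I : P → L → Prop) (P' : Set P) (θ : ℕ) : Prop :=
  ∀ x : P, x ∉ P' →
    {y : P | y ∉ P' ∧ subtendedOvoid I P' y = subtendedOvoid I P' x}.ncard = θ

/-- The perp of a set of points: all points collinear with every point of the set. -/
def perpSet (I : P → L → Prop) (X : Set P) : Set P :=
  {z : P | ∀ y ∈ X, Collinear I z y}

/-- The action of a permutation of the points of `S'` on subsets of `P'`. -/
def ovMap (P' : Set P) (f : ↥P' → ↥P') (O : Set P) : Set P :=
  {z : P | ∃ y : ↥P', y.1 ∈ O ∧ (f y).1 = z}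


/-! Two distinct external points `x, y` with `O_x = O_y` cannot be collinear: otherwise pick a
line `n` of `S'` missing the point of `S'` on `xy`; the projection `p` of `x` onto `n` lies in
`O_x = O_y`, so `p` is collinear with two points of the line `xy`, contradicting the GQ axiom.
The same axiom then rules out an external common neighbour `w` of `x` and `y`, since the
projection of `x` onto a line `wy` is the point of `S'` on it. Conversely, projecting `y` onto a
line `xu` with `u ∈ O_x` gives either `u` (so `u ∈ O_y`) or an external common neighbour. -/

def HasExternalCommonNeighbour (I : P → L → Prop) (P' : Set P) (x y : P) : Prop :=
  ∃ w : P, w ∉ P' ∧ Collinear I w x ∧ Collinear I w y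

section

variable {I : P → L → Prop} {P' : Set P} {L' : Set L}

lemma Collinear.symm {x y : P} (h : Collinear I x y) : Collinear I y x :=
  h.imp Eq.symm fun ⟨l, hx, hy⟩ => ⟨l, hy, hx⟩

lemma IsGQ.eq_of_projections (hGQ : IsGQ I) {p x y : P} {l M K : L}
    (hpl : ¬ I p l) (hpM : I p M) (hxM : I x M) (hxl : I x l)
    (hpK : I p K) (hyK : I y K) (hyl : I y l) : x = y := by
  obtain ⟨_, -, huniq⟩ := hGQ.2 p l hpl
  exact congrArg Prod.fst
    ((huniq (x, M) ⟨hpM, hxM, hxl⟩).trans (huniq (y, K) ⟨hpK, hyK, hyl⟩).symm)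

lemma IsFull.not_mem_of_incid (hFull : IsFull I P' L') {x : P} (hx : x ∉ P') {l : L}
    (hxl : I x l) : l ∉ L' :=
  fun hl => hx (hFull l hl x hxl)

lemma IsGeomHyperplane.existsUnique_of_not_mem (hHyp : IsGeomHyperplane I P' L') {l : L}
    (hl : l ∉ L') : ∃! u : P, I u l ∧ u ∈ P' :=
  ((hHyp.2 l).resolve_left fun h => hl h.1).2

lemma exists_line_of_mem_subtendedOvoid {x u : P} (hx : x ∉ P')
    (hu : u ∈ subtendedOvoid I P' x) : ∃ M : L, I x M ∧ I u M :=
  hu.2.resolve_left fun h => hx (h ▸ hu.1)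

lemma exists_line_mem_not_incid (hGQ : IsGQ I) (hSubThick : Thick (SubIncid I P' L')) (u : P') :
    ∃ n : L', ¬ I u n := by
  obtain ⟨m, -, -, -, -, -, hum, -, -⟩ := hSubThick.2 u
  obtain ⟨a, b, -, hab, -, -, ham, hbm, -⟩ := hSubThick.1 m
  obtain ⟨q, hqu, hqm⟩ : ∃ q : P', q ≠ u ∧ I q m := by
    by_cases hau : a = u
    · exact ⟨b, fun hbu => hab (hau.trans hbu.symm), hbm⟩
    · exact ⟨a, hau, ham⟩
  obtain ⟨n₁, n₂, -, h₁₂, -, -, hqn₁, hqn₂, -⟩ := hSubThick.2 q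
  obtain ⟨n, hnm, hqn⟩ : ∃ n : L', n ≠ m ∧ I q n := by
    by_cases h₁ : n₁ = m
    · exact ⟨n₂, fun h₂ => h₁₂ (h₁.trans h₂.symm), hqn₂⟩
    · exact ⟨n₁, h₁, hqn₁⟩
  exact ⟨n, fun hun => hnm (Subtype.ext
    (hGQ.1 q u (fun h => hqu (Subtype.ext h)) n m hqn hun hqm hum))⟩

lemma not_collinear_of_subtendedOvoid_eq (hGQ : IsGQ I) (hSubThick : Thick (SubIncid I P' L'))
    (hFull : IsFull I P' L') (hHyp : IsGeomHyperplane I P' L')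
    {x y : P} (hx : x ∉ P') (hy : y ∉ P') (hxy : x ≠ y)
    (hO : subtendedOvoid I P' x = subtendedOvoid I P' y) : ¬ Collinear I x y := by
  rintro (rfl | ⟨l, hxl, hyl⟩)
  · exact hxy rfl
  obtain ⟨u, ⟨-, huP⟩, hu_uniq⟩ :=
    hHyp.existsUnique_of_not_mem (hFull.not_mem_of_incid hx hxl)
  obtain ⟨n, hun⟩ := exists_line_mem_not_incid hGQ hSubThick ⟨u, huP⟩
  obtain ⟨⟨p, M⟩, ⟨hxM, hpM, hpn⟩, -⟩ := hGQ.2 x n fun h => hx (hFull n n.2 x h)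
  have hpP : p ∈ P' := hFull n n.2 p hpn
  have hpOy : p ∈ subtendedOvoid I P' y := hO ▸ ⟨hpP, Or.inr ⟨M, hxM, hpM⟩⟩
  obtain ⟨K, hyK, hpK⟩ := exists_line_of_mem_subtendedOvoid hy hpOy
  have hpl : ¬ I p l := fun hpl => hun (hu_uniq p ⟨hpl, hpP⟩ ▸ hpn)
  exact hxy (hGQ.eq_of_projections hpl hpM hxM hxl hpK hyK hyl)

lemma not_hasExternalCommonNeighbour_of_subtendedOvoid_eq (hGQ : IsGQ I)
    (hSubThick : Thick (SubIncid I P' L')) (hFull : IsFull I P' L')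
    (hHyp : IsGeomHyperplane I P' L') {x y : P} (hx : x ∉ P') (hy : y ∉ P') (hxy : x ≠ y)
    (hO : subtendedOvoid I P' x = subtendedOvoid I P' y) :
    ¬ HasExternalCommonNeighbour I P' x y := by
  have hncoll := not_collinear_of_subtendedOvoid_eq hGQ hSubThick hFull hHyp hx hy hxy hO
  rintro ⟨w, hw, hwx, rfl | ⟨N, hwN, hyN⟩⟩
  · exact hncoll hwx.symm
  have hxN : ¬ I x N := fun hxN => hncoll (Or.inr ⟨N, hxN, hyN⟩)
  obtain ⟨v, ⟨hvN, hvP⟩, -⟩ := hHyp.existsUnique_of_not_mem (hFull.not_mem_of_incid hw hwN)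
  have hvOx : v ∈ subtendedOvoid I P' x := hO ▸ ⟨hvP, Or.inr ⟨N, hyN, hvN⟩⟩
  obtain ⟨K, hxK, hvK⟩ := exists_line_of_mem_subtendedOvoid hx hvOx
  rcases hwx with rfl | ⟨M, hwM, hxM⟩
  · exact hxN hwN
  · exact hw (hGQ.eq_of_projections hxN hxM hwM hwN hxK hvK hvN ▸ hvP)

lemma subtendedOvoid_subset_of_not_hasExternalCommonNeighbour (hGQ : IsGQ I)
    (hFull : IsFull I P' L') (hHyp : IsGeomHyperplane I P' L') {x y : P} (hx : x ∉ P')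
    (h : ¬ HasExternalCommonNeighbour I P' x y) :
    subtendedOvoid I P' x ⊆ subtendedOvoid I P' y := by
  intro u hu
  obtain ⟨M, hxM, huM⟩ := exists_line_of_mem_subtendedOvoid hx hu
  have hyM : ¬ I y M := fun hyM => h ⟨x, hx, Or.inl rfl, Or.inr ⟨M, hxM, hyM⟩⟩
  obtain ⟨⟨z, N⟩, ⟨hyN, hzN, hzM⟩, -⟩ := hGQ.2 y M hyM
  by_cases hzP : z ∈ P'
  · obtain ⟨_, -, hM_uniq⟩ := hHyp.existsUnique_of_not_mem (hFull.not_mem_of_incid hx hxM)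
    have hzu : z = u := (hM_uniq z ⟨hzM, hzP⟩).trans (hM_uniq u ⟨huM, hu.1⟩).symm
    exact ⟨hu.1, Or.inr ⟨N, hyN, hzu ▸ hzN⟩⟩
  · exact absurd ⟨z, hzP, Or.inr ⟨M, hzM, hxM⟩, Or.inr ⟨N, hzN, hyN⟩⟩ h

lemma eq_or_not_hasExternalCommonNeighbour_iff (hGQ : IsGQ I)
    (hSubThick : Thick (SubIncid I P' L')) (hFull : IsFull I P' L')
    (hHyp : IsGeomHyperplane I P' L') (x y : APoint P') :
    (x = y ∨ ¬ HasExternalCommonNeighbour I P' x y) ↔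
      subtendedOvoid I P' x = subtendedOvoid I P' y := by
  constructor
  · rintro (rfl | h)
    · rfl
    · have h' : ¬ HasExternalCommonNeighbour I P' y x :=
        fun ⟨w, hw, hwy, hwx⟩ => h ⟨w, hw, hwx, hwy⟩
      exact (subtendedOvoid_subset_of_not_hasExternalCommonNeighbour hGQ hFull hHyp x.2 h).antisymm
        (subtendedOvoid_subset_of_not_hasExternalCommonNeighbour hGQ hFull hHyp y.2 h')
  · intro hO
    by_cases hxy : x = y
    · exact Or.inl hxy
    · exact Or.inr (not_hasExternalCommonNeighbour_of_subtendedOvoid_eq hGQ hSubThick hFull hHyp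
        x.2 y.2 (fun h => hxy (Subtype.ext h)) hO)

end

theorem statement4_general (I : P → L → Prop) (P' : Set P) (L' : Set L)
    (hGQ : IsGQ I) (hSubThick : Thick (SubIncid I P' L'))
    (hFull : IsFull I P' L') (hHyp : IsGeomHyperplane I P' L') :
    Equivalence (fun x y : APoint P' =>
        x = y ∨ ¬ ∃ w : P, w ∉ P' ∧ Collinear I w x.1 ∧ Collinear I w y.1) ∧
    (∀ x y : APoint P',
      (x = y ∨ ¬ ∃ w : P, w ∉ P' ∧ Collinear I w x.1 ∧ Collinear I w y.1) ↔
        piPoint I P' x = piPoint I P' y) := by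
  have fibers : ∀ x y : APoint P',
      (x = y ∨ ¬ HasExternalCommonNeighbour I P' x y) ↔ piPoint I P' x = piPoint I P' y :=
    fun x y => (eq_or_not_hasExternalCommonNeighbour_iff hGQ hSubThick hFull hHyp x y).trans
      (Subtype.ext_iff (a1 := piPoint I P' x) (a2 := piPoint I P' y)).symm
  refine ⟨?_, fibers⟩
  have hrel : (fun x y : APoint P' => x = y ∨ ¬ HasExternalCommonNeighbour I P' x y) =
      fun x y => piPoint I P' x = piPoint I P' y := by
    funext x y
    exact propext (fibers x y)
  exact hrel ▸ (Setoid.ker (piPoint I P')).iseqv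

/-- the relation `x ≈ y ↔ x = y ∨ (no point of A is collinear with both)`
is an equivalence relation on the points of `A`, whose classes are exactly the fibers
of the canonical projection `π`. -/
theorem statement4 (I : P → L → Prop) (P' : Set P) (L' : Set L)
    (hGQ : IsGQ I) (hThick : Thick I)
    (hSubGQ : IsGQ (SubIncid I P' L')) (hSubThick : Thick (SubIncid I P' L'))
    (hFull : IsFull I P' L') (hHyp : IsGeomHyperplane I P' L') :
    Equivalence (fun x y : APoint P' =>
        x = y ∨ ¬ ∃ w : P, w ∉ P' ∧ Collinear I w x.1 ∧ Collinear I w y.1) ∧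
    (∀ x y : APoint P',
      (x = y ∨ ¬ ∃ w : P, w ∉ P' ∧ Collinear I w x.1 ∧ Collinear I w y.1) ↔
        piPoint I P' x = piPoint I P' y) :=
  statement4_general I P' L' hGQ hSubThick hFull hHyp

end GQpaper
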